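/- Let T be a power-bounded operator on a Banach space E. Then the semigroup at infinity associated with the discrete semigroup (T^n)_{n∈ℕ₀} is non-empty and compact in the operator norm if and only if the set {T^n : n ∈ ℕ₀} is relatively compact in L(E) with respect to the operator norm. -/
import Mathlib


open Filter Topology

/-- The semigroup at infinity (w.r.t. the operator norm) of the discrete semigroup
`(T^n)_{n ∈ ℕ₀}`: `𝒯_∞ = ⋂_{m ∈ ℕ₀} closure {T^n : n ≥ m}`. -/
def dAtInfty {E : Type*} [NormedAddCommGroup E] [NormedSpace ℝ E]
    (T : E →L[ℝ] E) : Set (E →L[ℝ] E) :=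
  ⋂ m : ℕ, closure {A : E →L[ℝ] E | ∃ n : ℕ, m ≤ n ∧ A = T ^ n}

/-- For a power-bounded operator `T` on a Banach space `E`, the semigroup at
infinity of `(T^n)_{n∈ℕ₀}` is non-empty and compact in the operator norm if and only if the set
`{T^n : n ∈ ℕ₀}` is relatively compact in `L(E)`. -/
theorem statement6 {E : Type*} [NormedAddCommGroup E] [NormedSpace ℝ E] [CompleteSpace E]
    (T : E →L[ℝ] E) (hpb : ∃ M : ℝ, ∀ n : ℕ, ‖T ^ n‖ ≤ M) :
    ((dAtInfty T).Nonempty ∧ IsCompact (dAtInfty T)) ↔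
      IsCompact (closure (Set.range fun n : ℕ => T ^ n)) := by
  constructor
  · rintro ⟨⟨A, hA⟩, hK⟩
    obtain ⟨M, hM⟩ := hpb
    have hM0 : 0 ≤ M := le_trans (norm_nonneg _) (hM 0)
    -- `A * T ^ k` belongs to the semigroup at infinity, for every `k`.
    have hAk : ∀ k : ℕ, A * T ^ k ∈ dAtInfty T := by
      intro k
      rw [dAtInfty, Set.mem_iInter]
      intro m
      have hA' : A ∈ closure {B : E →L[ℝ] E | ∃ n : ℕ, m ≤ n ∧ B = T ^ n} := by
        have := Set.mem_iInter.mp hA m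
        exact this
      have hcont : Continuous fun B : E →L[ℝ] E => B * T ^ k :=
        continuous_id.mul continuous_const
      have himg := image_closure_subset_closure_image (s := {B : E →L[ℝ] E | ∃ n : ℕ, m ≤ n ∧ B = T ^ n}) hcont
        (Set.mem_image_of_mem _ hA')
      refine closure_mono ?_ himg
      rintro _ ⟨B, ⟨n, hn, rfl⟩, rfl⟩
      exact ⟨n + k, le_trans hn (Nat.le_add_right n k), (pow_add T n k).symm⟩
    -- Total boundedness of the orbit.
    have tb : TotallyBounded (Set.range fun n : ℕ => T ^ n) := by
      rw [Metric.totallyBounded_iff]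
      intro ε hε
      set δ := ε / (2 * (M + 1)) with hδdef
      have hδ : 0 < δ := by positivity
      have hA0 : A ∈ closure {B : E →L[ℝ] E | ∃ n : ℕ, 0 ≤ n ∧ B = T ^ n} := by
        have := Set.mem_iInter.mp hA 0
        exact this
      obtain ⟨B, hB, hBA⟩ := Metric.mem_closure_iff.mp hA0 δ hδ
      obtain ⟨n, -, rfl⟩ := hB
      obtain ⟨t, htfin, htcov⟩ :=
        Metric.totallyBounded_iff.mp hK.totallyBounded (ε / 2) (by positivity)
      refine ⟨t ∪ Set.range fun i : Fin n => T ^ (i : ℕ),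
        htfin.union (Set.finite_range _), ?_⟩
      rintro _ ⟨j, rfl⟩
      by_cases hj : j < n
      · refine Set.mem_biUnion (Set.mem_union_right _ ⟨⟨j, hj⟩, rfl⟩) ?_
        simp [hε]
      · push_neg at hj
        obtain ⟨k, rfl⟩ := Nat.exists_eq_add_of_le hj
        have h1 : dist (T ^ (n + k)) (A * T ^ k) ≤ ε / 2 := by
          rw [dist_eq_norm]
          have : T ^ (n + k) - A * T ^ k = (T ^ n - A) * T ^ k := by
            rw [sub_mul, ← pow_add]
          rw [this]
          calc ‖(T ^ n - A) * T ^ k‖ ≤ ‖T ^ n - A‖ * ‖T ^ k‖ := norm_mul_le _ _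
            _ ≤ δ * (M + 1) := by
                apply mul_le_mul _ (le_trans (hM k) (by linarith)) (norm_nonneg _) hδ.le
                rw [← dist_eq_norm, dist_comm]
                exact hBA.le
            _ = ε / 2 := by
                rw [hδdef]
                field_simp
        have h2 := htcov (hAk k)
        rw [Set.mem_iUnion₂] at h2
        obtain ⟨y, hy, hdy⟩ := h2
        refine Set.mem_biUnion (Set.mem_union_left _ hy) ?_
        rw [Metric.mem_ball]
        calc dist (T ^ (n + k)) y ≤ dist (T ^ (n + k)) (A * T ^ k) + dist (A * T ^ k) y :=
              dist_triangle _ _ _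
          _ < ε / 2 + ε / 2 := by
              have := Metric.mem_ball.mp hdy
              linarith
          _ = ε := by ring
    exact TotallyBounded.isCompact_of_isClosed tb.closure isClosed_closure
  · intro hc
    have hsub : ∀ m : ℕ, closure {A : E →L[ℝ] E | ∃ n : ℕ, m ≤ n ∧ A = T ^ n} ⊆
        closure (Set.range fun n : ℕ => T ^ n) := by
      intro m
      apply closure_mono
      rintro _ ⟨n, -, rfl⟩
      exact ⟨n, rfl⟩
    have hcl : ∀ m : ℕ, IsClosed (closure {A : E →L[ℝ] E | ∃ n : ℕ, m ≤ n ∧ A = T ^ n}) :=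
      fun m => isClosed_closure
    have hcpt : ∀ m : ℕ, IsCompact (closure {A : E →L[ℝ] E | ∃ n : ℕ, m ≤ n ∧ A = T ^ n}) :=
      fun m => hc.of_isClosed_subset (hcl m) (hsub m)
    constructor
    · apply IsCompact.nonempty_iInter_of_sequence_nonempty_isCompact_isClosed
        (fun m => closure {A : E →L[ℝ] E | ∃ n : ℕ, m ≤ n ∧ A = T ^ n})
      · intro i
        apply closure_mono
        rintro _ ⟨n, hn, rfl⟩
        exact ⟨n, le_trans (Nat.le_succ i) hn, rfl⟩
      · intro i
        exact ⟨T ^ i, subset_closure ⟨i, le_refl i, rfl⟩⟩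
      · exact hcpt 0
      · exact hcl
    · exact (hcpt 0).of_isClosed_subset
        (isClosed_iInter fun _ => isClosed_closure)
        (Set.iInter_subset _ 0)
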